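/- For every α ≥ e (where e is Euler's number), every Facility Location game with β_v > 0 for all nodes v (with weighted agents and arbitrary nonnegative connection costs) has an α-approximate strong equilibrium. -/

import Mathlib

open Finset
open scoped Classical

/-- A Facility Location game: nodes `V`, agents `A`, connection costs `d`,
facility opening costs `β`, agent locations `u` and positive weights `w`. -/
structure FLGame (V A : Type*) [Fintype V] [Fintype A] where
  d : V → V → ℝ
  d_nonneg : ∀ x y, 0 ≤ d x y
  β : V → ℝ
  β_nonneg : ∀ v, 0 ≤ β v
  u : A → V
  w : A → ℝ
  w_pos : ∀ i, 0 < w i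
  V_nonempty : Nonempty V
  A_nonempty : Nonempty A

namespace FLGame

variable {V A : Type*} [Fintype V] [Fintype A]

/-- Total weight forwarded to node `v` under profile `s`. -/
noncomputable def Wmass (G : FLGame V A) (s : A → V) (v : V) : ℝ :=
  ∑ j, if s j = v then G.w j else 0

/-- Individual cost of agent `i` under profile `s`. -/
noncomputable def cost (G : FLGame V A) (s : A → V) (i : A) : ℝ :=
  G.w i * G.d (G.u i) (s i) + G.w i * G.β (s i) / G.Wmass s (s i)

/-- Social cost of profile `s`. -/
noncomputable def social (G : FLGame V A) (s : A → V) : ℝ := ∑ i, G.cost s i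

/-- All agents have unit weight. -/
def Unweighted (G : FLGame V A) : Prop := ∀ i, G.w i = 1

/-- `d` is a metric on `V`. -/
def Metric (G : FLGame V A) : Prop :=
  (∀ x, G.d x x = 0) ∧ (∀ x y, G.d x y = G.d y x) ∧ (∀ x y, 0 ≤ G.d x y) ∧
    (∀ x y z, G.d x z ≤ G.d x y + G.d y z)

/-- `s'` is obtained from `s` by a best-response move of agent `i`. -/
def BRMove (G : FLGame V A) (s s' : A → V) (i : A) : Prop :=
  (∀ j, j ≠ i → s' j = s j) ∧ G.cost s' i < G.cost s i ∧
    (∀ s'' : A → V, (∀ j, j ≠ i → s'' j = s j) → G.cost s' i ≤ G.cost s'' i)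

/-- `s` is reached from `s0` by iterative best response. -/
def ReachedByIBR (G : FLGame V A) (s0 s : A → V) : Prop :=
  ∃ (T : ℕ) (seq : ℕ → A → V), seq 0 = s0 ∧ seq T = s ∧
    ∀ t, t < T → ∃ i, G.BRMove (seq t) (seq (t + 1)) i

/-- `s` is a pure Nash equilibrium. -/
def IsPNE (G : FLGame V A) (s : A → V) : Prop :=
  ∀ (i : A) (v : V), G.cost s i ≤ G.cost (Function.update s i v) i

/-- The nonempty coalition `I` deviates from `s` to `s'`, every member improving
by a factor strictly more than `α`. -/
def CoalDev (G : FLGame V A) (α : ℝ) (s s' : A → V) (I : Finset A) : Prop :=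
  I.Nonempty ∧ (∀ j ∉ I, s' j = s j) ∧ ∀ i ∈ I, α * G.cost s' i < G.cost s i

/-- `s` is an `α`-approximate strong equilibrium. -/
def ApproxSE (G : FLGame V A) (α : ℝ) (s : A → V) : Prop :=
  ¬ ∃ (I : Finset A) (s' : A → V), G.CoalDev α s s' I

end FLGame

/-
The weighted log-cost potential `Φ(s) = ∑ᵢ wᵢ log cᵢ(s)` has a minimiser `s`, and `s` is an
`e`-approximate strong equilibrium. If a coalition `I` deviates, each member improves by a factor
above `e`, so the members lower `Φ` by more than their total weight `w(I)`. An outsider at node `a`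
still shares its facility with the outsider mass `Y(a)` there, so its cost grows by at most the
factor `W(a)/Y(a)`; by `log x ≤ x - 1` the outsiders raise `Φ` by at most
`∑ₐ Y(a) log (W(a)/Y(a)) ≤ ∑ₐ (W(a) - Y(a)) = w(I)`. Hence `Φ` would strictly decrease.
-/

open Real

lemma log_add_one_lt_log_of_mul_lt {α x y : ℝ} (hα : exp 1 ≤ α) (hx : 0 < x) (h : α * x < y) :
    log x + 1 < log y := by
  have hα0 : 0 < α := (exp_pos 1).trans_le hα
  have hlogα : 1 ≤ log α := (le_log_iff_exp_le hα0).mpr hα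
  have := log_lt_log (mul_pos hα0 hx) h
  rw [log_mul hα0.ne' hx.ne'] at this
  linarith

lemma mul_log_sub_log_le_sub {y W : ℝ} (hy : 0 ≤ y) (hyW : y ≤ W) :
    y * (log W - log y) ≤ W - y := by
  rcases hy.eq_or_lt with rfl | hy
  · simpa using hyW
  have hW : 0 < W := hy.trans_le hyW
  have h := log_le_sub_one_of_pos (div_pos hW hy)
  rw [log_div hW.ne' hy.ne'] at h
  calc y * (log W - log y) ≤ y * (W / y - 1) := mul_le_mul_of_nonneg_left h hy.le
    _ = W - y := by field_simp

namespace FLGame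

variable {V A : Type*} [Fintype V] [Fintype A] (G : FLGame V A)

noncomputable def massOn (s : A → V) (J : Finset A) (v : V) : ℝ :=
  ∑ j ∈ J, if s j = v then G.w j else 0

noncomputable def potential (s : A → V) : ℝ :=
  ∑ i, G.w i * log (G.cost s i)

lemma massOn_nonneg (s : A → V) (J : Finset A) (v : V) : 0 ≤ G.massOn s J v :=
  sum_nonneg fun j _ => ite_nonneg (G.w_pos j).le le_rfl

lemma w_le_massOn (s : A → V) {J : Finset A} {j : A} (hj : j ∈ J) :
    G.w j ≤ G.massOn s J (s j) := by
  simpa [massOn] using single_le_sum (f := fun k => if s k = s j then G.w k else 0)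
    (fun k _ => ite_nonneg (G.w_pos k).le le_rfl) hj

lemma massOn_le_Wmass (s : A → V) (J : Finset A) (v : V) : G.massOn s J v ≤ G.Wmass s v :=
  sum_le_sum_of_subset_of_nonneg (subset_univ J) fun k _ _ => ite_nonneg (G.w_pos k).le le_rfl

lemma massOn_add_massOn_compl (s : A → V) (J : Finset A) (v : V) :
    G.massOn s J v + G.massOn s Jᶜ v = G.Wmass s v :=
  sum_add_sum_compl J _

lemma massOn_congr {s s' : A → V} {J : Finset A} (h : ∀ j ∈ J, s' j = s j) :
    G.massOn s' J = G.massOn s J :=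
  funext fun _ => sum_congr rfl fun j hj => by rw [h j hj]

lemma sum_w_mul_comp_eq_sum_massOn_mul (s : A → V) (J : Finset A) (f : V → ℝ) :
    ∑ j ∈ J, G.w j * f (s j) = ∑ v, G.massOn s J v * f v := by
  simp only [massOn, sum_mul, ite_mul, zero_mul]
  rw [sum_comm]
  refine sum_congr rfl fun j _ => ?_
  simp

lemma Wmass_pos (s : A → V) (i : A) : 0 < G.Wmass s (s i) :=
  (G.w_pos i).trans_le ((G.w_le_massOn s (mem_univ i)).trans (G.massOn_le_Wmass s _ _))

lemma cost_pos {s : A → V} {i : A} (hβ : 0 < G.β (s i)) : 0 < G.cost s i :=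
  add_pos_of_nonneg_of_pos (mul_nonneg (G.w_pos i).le (G.d_nonneg _ _))
    (div_pos (mul_pos (G.w_pos i) hβ) (G.Wmass_pos s i))

lemma cost_le_cost_mul_div {s s' : A → V} {i : A} {m : ℝ} (hsi : s' i = s i) (hm : 0 < m)
    (hm' : m ≤ G.Wmass s' (s i)) (hmW : m ≤ G.Wmass s (s i)) :
    G.cost s' i ≤ G.cost s i * (G.Wmass s (s i) / m) := by
  have hdist : G.w i * G.d (G.u i) (s i) ≤ G.w i * G.d (G.u i) (s i) * (G.Wmass s (s i) / m) :=
    le_mul_of_one_le_right (mul_nonneg (G.w_pos i).le (G.d_nonneg _ _)) ((one_le_div hm).mpr hmW)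
  have hshare : G.w i * G.β (s i) / G.Wmass s' (s i) ≤ G.w i * G.β (s i) / m :=
    div_le_div_of_nonneg_left (mul_nonneg (G.w_pos i).le (G.β_nonneg _)) hm hm'
  calc G.cost s' i
      = G.w i * G.d (G.u i) (s i) + G.w i * G.β (s i) / G.Wmass s' (s i) := by
        rw [cost, hsi]
    _ ≤ G.w i * G.d (G.u i) (s i) * (G.Wmass s (s i) / m) + G.w i * G.β (s i) / m :=
        add_le_add hdist hshare
    _ = G.cost s i * (G.Wmass s (s i) / m) := by
        have := (G.Wmass_pos s i).ne'
        rw [cost]; field_simp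

variable {G}

lemma log_cost_le_of_mass_stays {s s' : A → V} {i : A} {m : ℝ} (hβ : 0 < G.β (s i))
    (hsi : s' i = s i) (hm : 0 < m) (hm' : m ≤ G.Wmass s' (s i)) (hmW : m ≤ G.Wmass s (s i)) :
    log (G.cost s' i) ≤ log (G.cost s i) + (log (G.Wmass s (s i)) - log m) := by
  have hW := G.Wmass_pos s i
  have hc' : 0 < G.cost s' i := G.cost_pos (hsi ▸ hβ)
  have hc := G.cost_pos hβ
  calc log (G.cost s' i) ≤ log (G.cost s i * (G.Wmass s (s i) / m)) :=
        log_le_log hc' (G.cost_le_cost_mul_div hsi hm hm' hmW)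
    _ = _ := by rw [log_mul hc.ne' (div_pos hW hm).ne', log_div hW.ne' hm.ne']

variable {α : ℝ} {s s' : A → V} {I : Finset A}

lemma sum_log_cost_add_lt_of_coalDev (hβ : ∀ v, 0 < G.β v) (hα : exp 1 ≤ α)
    (h : G.CoalDev α s s' I) :
    ∑ i ∈ I, G.w i * log (G.cost s' i) + ∑ i ∈ I, G.w i < ∑ i ∈ I, G.w i * log (G.cost s i) := by
  obtain ⟨hne, -, himp⟩ := h
  rw [← sum_add_distrib]
  refine sum_lt_sum_of_nonempty hne fun i hi => ?_
  have := log_add_one_lt_log_of_mul_lt hα (G.cost_pos (hβ _)) (himp i hi)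
  rw [← mul_add_one]
  exact mul_lt_mul_of_pos_left this (G.w_pos i)

lemma sum_compl_log_cost_le_of_coalDev (hβ : ∀ v, 0 < G.β v) (h : G.CoalDev α s s' I) :
    ∑ j ∈ Iᶜ, G.w j * log (G.cost s' j) ≤ ∑ j ∈ Iᶜ, G.w j * log (G.cost s j) + ∑ i ∈ I, G.w i := by
  obtain ⟨-, hfix, -⟩ := h
  set Y := G.massOn s Iᶜ
  have hfixY : G.massOn s' Iᶜ = Y := G.massOn_congr fun j hj => hfix j (mem_compl.mp hj)
  have houtsiders : ∑ j ∈ Iᶜ, G.w j * log (G.cost s' j) ≤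
      ∑ j ∈ Iᶜ, G.w j * (log (G.cost s j) + (log (G.Wmass s (s j)) - log (Y (s j)))) := by
    refine sum_le_sum fun j hj => mul_le_mul_of_nonneg_left ?_ (G.w_pos j).le
    have hY : G.w j ≤ Y (s j) := G.w_le_massOn s hj
    refine log_cost_le_of_mass_stays (hβ _) (hfix j (mem_compl.mp hj)) ((G.w_pos j).trans_le hY)
      ?_ (G.massOn_le_Wmass s _ _)
    rw [← hfixY, ← hfix j (mem_compl.mp hj)]
    exact G.massOn_le_Wmass s' _ _
  have hgibbs : ∑ v, Y v * (log (G.Wmass s v) - log (Y v)) ≤ ∑ i ∈ I, G.w i := by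
    calc ∑ v, Y v * (log (G.Wmass s v) - log (Y v)) ≤ ∑ v, G.massOn s I v :=
          sum_le_sum fun v _ => by
            have := G.massOn_add_massOn_compl s I v
            have := mul_log_sub_log_le_sub (G.massOn_nonneg s Iᶜ v) (G.massOn_le_Wmass s Iᶜ v)
            linarith
      _ = ∑ i ∈ I, G.w i := by
          simpa using (G.sum_w_mul_comp_eq_sum_massOn_mul s I fun _ => 1).symm
  simp only [mul_add, sum_add_distrib] at houtsiders
  rw [G.sum_w_mul_comp_eq_sum_massOn_mul s Iᶜ fun v => log (G.Wmass s v) - log (Y v)] at houtsiders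
  linarith

lemma potential_lt_of_coalDev (hβ : ∀ v, 0 < G.β v) (hα : exp 1 ≤ α) (h : G.CoalDev α s s' I) :
    G.potential s' < G.potential s := by
  have hmembers := sum_log_cost_add_lt_of_coalDev hβ hα h
  have houtsiders := sum_compl_log_cost_le_of_coalDev hβ h
  unfold potential
  rw [← sum_add_sum_compl I, ← sum_add_sum_compl I fun i => G.w i * log (G.cost s i)]
  linarith

end FLGame

/-- For every `α ≥ e`, every Facility Location game with positive
facility costs (weighted agents, general networks) has an `α`-approximate strong
equilibrium. -/
theorem stmt11 {V A : Type*} [Fintype V] [Fintype A] (G : FLGame V A)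
    (hβ : ∀ v, 0 < G.β v) (α : ℝ) (hα : Real.exp 1 ≤ α) :
    ∃ s : A → V, G.ApproxSE α s := by
  have : Nonempty V := G.V_nonempty
  obtain ⟨s, hmin⟩ := Finite.exists_min G.potential
  exact ⟨s, fun ⟨_, s', hdev⟩ => (G.potential_lt_of_coalDev hβ hα hdev).not_ge (hmin s')⟩
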